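/- In the geometric-Brownian-motion case, as λ₀ → ∞: P^L_A(λ₀) → 0, Q^L_A(λ₀) → 0, P^U_B(λ₀) → 0, Q^U_B(λ₀) → 0, P^L_B(λ₀) → α, Q^L_B(λ₀) → −αK̃, P^U_A(λ₀) → (r−μ)α/(r−μ+η), and Q^U_A(λ₀) → −rαK̃/(r+η). -/

import Mathlib

open Real Filter

lemma my_sqrt_atTop : Tendsto Real.sqrt atTop atTop := by
  refine tendsto_atTop_atTop.2 fun b => ⟨(max b 0)^2, fun x hx => ?_⟩
  calc b ≤ max b 0 := le_max_left _ _
    _ = Real.sqrt ((max b 0)^2) := (Real.sqrt_sq (le_max_right _ _)).symm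
    _ ≤ Real.sqrt x := Real.sqrt_le_sqrt hx

lemma my_sqrt_sub_lin (c : ℝ) (hc : 0 ≤ c) :
    Tendsto (fun x : ℝ => x - Real.sqrt (x^2 + c)) atTop (nhds 0) := by
  have hg : Tendsto (fun x : ℝ => -(c/2) * x⁻¹) atTop (nhds 0) := by
    simpa using tendsto_inv_atTop_zero.const_mul (-(c/2))
  refine tendsto_of_tendsto_of_tendsto_of_le_of_le' hg tendsto_const_nhds ?_ ?_
  · filter_upwards [eventually_gt_atTop (0:ℝ)] with x hx
    have he : (x + c/(2*x))^2 = x^2 + c + (c/(2*x))^2 := by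
      field_simp; ring
    have h1 : Real.sqrt (x^2+c) ≤ x + c/(2*x) := by
      rw [show x + c/(2*x) = Real.sqrt ((x + c/(2*x))^2) from
        (Real.sqrt_sq (by positivity)).symm]
      apply Real.sqrt_le_sqrt
      have h2 : (0:ℝ) ≤ (c/(2*x))^2 := sq_nonneg _
      linarith
    have h3 : c/(2*x) = (c/2) * x⁻¹ := by field_simp
    linarith
  · filter_upwards [eventually_ge_atTop (0:ℝ)] with x hx
    have h4 := Real.sqrt_le_sqrt (show x^2 ≤ x^2 + c by linarith)
    rw [Real.sqrt_sq hx] at h4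
    linarith


set_option maxHeartbeats 4000000 in
/-- In the GBM case, as `λ₀ → ∞`: `P^L_A, Q^L_A, P^U_B, Q^U_B → 0`,
`P^L_B → α`, `Q^L_B → -αK̃`, `P^U_A → (r-μ)α/(r-μ+η)`, `Q^U_A → -rαK̃/(r+η)`. -/
theorem asymptotics_lambda0_PQ
    (r μ σ l₁ η α Kt : ℝ)
    (hσ : 0 < σ) (hl₁ : 0 < l₁) (hη : 0 < η) (hr : 0 < r) (hrμ : μ < r)
    (hα : 0 < α) (hKt : 0 < Kt)
    (m : ℝ) (hm : m = 1/2 - μ / σ^2)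
    (βLB : ℝ) (hβLB : βLB = m + Real.sqrt (m^2 + 2 * r / σ^2))
    (βLA βUA βUB a₁ b₁ : ℝ → ℝ)
    (hβLA : ∀ l₀ : ℝ, βLA l₀ = m + Real.sqrt (m^2 + 2 * (l₀ + l₁ + r) / σ^2))
    (hβUA : ∀ l₀ : ℝ, βUA l₀ = m - Real.sqrt (m^2 +
      (l₀ + l₁ + η + 2 * r - Real.sqrt ((l₀ + l₁ + η)^2 - 4 * l₀ * η)) / σ^2))
    (hβUB : ∀ l₀ : ℝ, βUB l₀ = m - Real.sqrt (m^2 +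
      (l₀ + l₁ + η + 2 * r + Real.sqrt ((l₀ + l₁ + η)^2 - 4 * l₀ * η)) / σ^2))
    (ha₁ : ∀ l₀ : ℝ, a₁ l₀ = α * η * (r - μ + l₀) / ((r - μ + l₀) * (r - μ + l₁ + η) - l₀ * l₁))
    (hb₁ : ∀ l₀ : ℝ, b₁ l₀ = α * Kt * η * (r + l₀) / (l₀ * l₁ - (r + l₀) * (r + l₁ + η)))
    (D₁ D₂ D₃ : ℝ → ℝ)
    (hD₁ : ∀ l₀ : ℝ, D₁ l₀ = βLA l₀ - βLB)
    (hD₂ : ∀ l₀ : ℝ, D₂ l₀ = βLA l₀ + βLB - βUA l₀ - βUB l₀)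
    (hD₃ : ∀ l₀ : ℝ, D₃ l₀ = βUA l₀ - βUB l₀)
    (PLA QLA PLB QLB PUA QUA PUB QUB : ℝ → ℝ)
    (hPLA : ∀ l₀ : ℝ, PLA l₀ = (α * (βLB - βUA l₀) * (-βLB + βUB l₀)
      + a₁ l₀ * (βUA l₀ - 1) * (βUB l₀ - 1)) / (D₁ l₀ * D₂ l₀))
    (hQLA : ∀ l₀ : ℝ, QLA l₀ = (-(α * Kt) * (βLB - βUA l₀) * (-βLB + βUB l₀)
      + b₁ l₀ * βUA l₀ * βUB l₀) / (D₁ l₀ * D₂ l₀))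
    (hPLB : ∀ l₀ : ℝ, PLB l₀ = (α * (βLA l₀ - βUA l₀) * (βLA l₀ - βUB l₀)
      - a₁ l₀ * (βUA l₀ - 1) * (βUB l₀ - 1)) / (D₁ l₀ * D₂ l₀))
    (hQLB : ∀ l₀ : ℝ, QLB l₀ = (-(α * Kt) * (βLA l₀ - βUA l₀) * (βLA l₀ - βUB l₀)
      - b₁ l₀ * βUA l₀ * βUB l₀) / (D₁ l₀ * D₂ l₀))
    (hPUA : ∀ l₀ : ℝ, PUA l₀ = (α * (βLA l₀ - βUB l₀) * (βLB - βUB l₀)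
      + a₁ l₀ * (βUB l₀ - 1) * (βLA l₀ + βLB - βUB l₀ - 1)) / (D₃ l₀ * D₂ l₀))
    (hQUA : ∀ l₀ : ℝ, QUA l₀ = (-(α * Kt) * (βLA l₀ - βUB l₀) * (βLB - βUB l₀)
      + b₁ l₀ * βUB l₀ * (βLA l₀ + βLB - βUB l₀)) / (D₃ l₀ * D₂ l₀))
    (hPUB : ∀ l₀ : ℝ, PUB l₀ = (α * (βLA l₀ - βUA l₀) * (-βLB + βUA l₀)
      - a₁ l₀ * (βUA l₀ - 1) * (βLA l₀ + βLB - βUA l₀ - 1)) / (D₃ l₀ * D₂ l₀))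
    (hQUB : ∀ l₀ : ℝ, QUB l₀ = (-(α * Kt) * (βLA l₀ - βUA l₀) * (-βLB + βUA l₀)
      - b₁ l₀ * βUA l₀ * (βLA l₀ + βLB - βUA l₀)) / (D₃ l₀ * D₂ l₀)) :
    Tendsto PLA atTop (nhds 0) ∧
    Tendsto QLA atTop (nhds 0) ∧
    Tendsto PUB atTop (nhds 0) ∧
    Tendsto QUB atTop (nhds 0) ∧
    Tendsto PLB atTop (nhds α) ∧
    Tendsto QLB atTop (nhds (-(α * Kt))) ∧
    Tendsto PUA atTop (nhds ((r - μ) * α / (r - μ + η))) ∧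
    Tendsto QUA atTop (nhds (-(r * α * Kt) / (r + η))) := by
  have hσ2 : (0:ℝ) < σ^2 := by positivity
  -- βLA → ∞
  have hlin : Tendsto (fun L : ℝ => L + l₁ + r) atTop atTop :=
    tendsto_atTop_add_const_right _ r (tendsto_atTop_add_const_right _ l₁ tendsto_id)
  have h1 : Tendsto (fun L : ℝ => m^2 + 2*(L+l₁+r)/σ^2) atTop atTop := by
    apply tendsto_atTop_add_const_left
    exact (hlin.atTop_mul_const (show (0:ℝ) < 2/σ^2 by positivity)).congr fun L => by ring
  have hSA : Tendsto (fun L : ℝ => Real.sqrt (m^2 + 2*(L+l₁+r)/σ^2)) atTop atTop :=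
    my_sqrt_atTop.comp h1
  have hβLAtop : Tendsto βLA atTop atTop :=
    (tendsto_atTop_add_const_left _ m hSA).congr fun L => (hβLA L).symm
  have hu : Tendsto (fun L => (βLA L)⁻¹) atTop (nhds 0) := hβLAtop.inv_tendsto_atTop
  have hβLApos : ∀ᶠ L : ℝ in atTop, 0 < βLA L := hβLAtop.eventually_gt_atTop 0
  -- key: (L+l₁-η) - √((L+l₁+η)² - 4Lη) → 0
  have key : Tendsto (fun L : ℝ => (L + l₁ - η) - Real.sqrt ((L+l₁+η)^2 - 4*L*η))
      atTop (nhds 0) := by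
    have hshift : Tendsto (fun L : ℝ => L + (l₁ - η)) atTop atTop :=
      tendsto_atTop_add_const_right _ _ tendsto_id
    have h := (my_sqrt_sub_lin (4*l₁*η) (by positivity)).comp hshift
    refine h.congr fun L => ?_
    simp only [Function.comp]
    rw [show (L + (l₁ - η))^2 + 4*l₁*η = (L+l₁+η)^2 - 4*L*η from by ring]
    ring
  -- βUA → W
  have hinner : Tendsto (fun L : ℝ => L + l₁ + η + 2*r - Real.sqrt ((L+l₁+η)^2 - 4*L*η))
      atTop (nhds (2*η + 2*r)) := by
    have h2 := key.add_const (2*η + 2*r)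
    rw [zero_add] at h2
    exact h2.congr fun L => by ring
  have hW : Tendsto βUA atTop (nhds (m - Real.sqrt (m^2 + (2*η+2*r)/σ^2))) := by
    have h3 : Tendsto (fun L : ℝ => m - Real.sqrt (m^2 +
        (L+l₁+η+2*r - Real.sqrt ((L+l₁+η)^2-4*L*η))/σ^2)) atTop
        (nhds (m - Real.sqrt (m^2 + (2*η+2*r)/σ^2))) :=
      tendsto_const_nhds.sub ((Tendsto.const_add (m^2) (hinner.div_const (σ^2))).sqrt)
    exact h3.congr fun L => (hβUA L).symm
  -- βLA + βUB → 2m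
  have hpq : Tendsto (fun L : ℝ => ((L+l₁-η) - Real.sqrt ((L+l₁+η)^2-4*L*η))/σ^2)
      atTop (nhds 0) := by
    simpa using key.div_const (σ^2)
  have hsum : Tendsto (fun L : ℝ => Real.sqrt (m^2+2*(L+l₁+r)/σ^2)
      + Real.sqrt (m^2 + (L+l₁+η+2*r + Real.sqrt ((L+l₁+η)^2-4*L*η))/σ^2)) atTop atTop :=
    tendsto_atTop_mono (fun L => le_add_of_nonneg_right (Real.sqrt_nonneg _)) hSA
  have hdiff : Tendsto (fun L : ℝ => Real.sqrt (m^2+2*(L+l₁+r)/σ^2)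
      - Real.sqrt (m^2 + (L+l₁+η+2*r+Real.sqrt ((L+l₁+η)^2-4*L*η))/σ^2)) atTop (nhds 0) := by
    have hmul := hpq.mul hsum.inv_tendsto_atTop
    rw [zero_mul] at hmul
    refine hmul.congr' ?_
    filter_upwards [eventually_ge_atTop (0:ℝ), h1.eventually_ge_atTop 0,
      hsum.eventually_gt_atTop 0] with L hL0 hp hAB
    have hSnn : 0 ≤ Real.sqrt ((L+l₁+η)^2-4*L*η) := Real.sqrt_nonneg _
    have hqnn : 0 ≤ m^2 + (L+l₁+η+2*r+Real.sqrt ((L+l₁+η)^2-4*L*η))/σ^2 := by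
      have : 0 ≤ L+l₁+η+2*r+Real.sqrt ((L+l₁+η)^2-4*L*η) := by linarith
      positivity
    have hSAv := Real.sq_sqrt hp
    have hSBv := Real.sq_sqrt hqnn
    set A2 := Real.sqrt (m^2+2*(L+l₁+r)/σ^2) with hA2
    set B2 := Real.sqrt (m^2+(L+l₁+η+2*r+Real.sqrt ((L+l₁+η)^2-4*L*η))/σ^2) with hB2
    have hfact : A2^2 - B2^2 = ((L+l₁-η) - Real.sqrt ((L+l₁+η)^2-4*L*η))/σ^2 := by
      rw [hSAv, hSBv]; ring
    have hABne : A2 + B2 ≠ 0 := ne_of_gt hAB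
    simp only [Pi.inv_apply]
    rw [← hfact, show A2^2 - B2^2 = (A2 - B2)*(A2 + B2) from by ring,
      mul_inv_cancel_right₀ hABne]
  have hs : Tendsto (fun L => βLA L + βUB L) atTop (nhds (2*m)) := by
    have h5 := tendsto_const_nhds.add hdiff (f := fun _ : ℝ => 2*m)
    rw [add_zero] at h5
    exact h5.congr fun L => by rw [hβLA L, hβUB L]; ring
  have hv : Tendsto (fun L => βUB L * (βLA L)⁻¹) atTop (nhds (-1)) := by
    have h6 := (hs.mul hu).sub_const 1
    rw [mul_zero, zero_sub] at h6
    refine Tendsto.congr' ?_ h6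
    filter_upwards [hβLApos] with L hL
    have : βLA L ≠ 0 := ne_of_gt hL
    field_simp
    ring
  -- a₁ → Av
  have hA : Tendsto a₁ atTop (nhds (α*η/(r-μ+η))) := by
    have hnum : Tendsto (fun L : ℝ => α*η*((r-μ)*L⁻¹+1)) atTop (nhds (α*η)) := by
      have h7 := ((tendsto_inv_atTop_zero.const_mul (r-μ)).add_const 1).const_mul (α*η)
      rw [mul_zero, zero_add, mul_one] at h7
      exact h7
    have hden : Tendsto (fun L : ℝ => (r-μ+η) + (r-μ)*(r-μ+l₁+η)*L⁻¹)
        atTop (nhds (r-μ+η)) := by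
      have h8 := (tendsto_inv_atTop_zero.const_mul ((r-μ)*(r-μ+l₁+η))).const_add (r-μ+η)
      rw [mul_zero, add_zero] at h8
      exact h8
    have hne : r-μ+η ≠ 0 := ne_of_gt (by linarith)
    refine Tendsto.congr' ?_ (hnum.div hden hne)
    filter_upwards [eventually_gt_atTop (0:ℝ)] with L hL
    have hLne : L ≠ 0 := ne_of_gt hL
    simp only [Pi.div_apply]
    rw [ha₁ L,
      show α*η*((r-μ)*L⁻¹+1) = (α * η * (r - μ + L)) * L⁻¹ from by field_simp,
      show (r-μ+η) + (r-μ)*(r-μ+l₁+η)*L⁻¹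
          = ((r - μ + L) * (r - μ + l₁ + η) - L * l₁) * L⁻¹ from by { field_simp; try ring; try tauto },
      mul_div_mul_right _ _ (inv_ne_zero hLne)]
  -- b₁ → Bv
  have hB : Tendsto b₁ atTop (nhds (-(α*Kt*η/(r+η)))) := by
    have hnum : Tendsto (fun L : ℝ => α*Kt*η*(r*L⁻¹+1)) atTop (nhds (α*Kt*η)) := by
      have h7 := ((tendsto_inv_atTop_zero.const_mul r).add_const 1).const_mul (α*Kt*η)
      rw [mul_zero, zero_add, mul_one] at h7
      exact h7
    have hden : Tendsto (fun L : ℝ => -(r+η) - r*(r+l₁+η)*L⁻¹) atTop (nhds (-(r+η))) := by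
      have h8 := tendsto_const_nhds.sub (tendsto_inv_atTop_zero.const_mul (r*(r+l₁+η)))
        (f := fun _ : ℝ => -(r+η))
      rw [mul_zero, sub_zero] at h8
      exact h8
    have hne : -(r+η) ≠ 0 := by
      have : (0:ℝ) < r + η := by positivity
      linarith [this]
    have h9 := hnum.div hden hne
    rw [div_neg] at h9
    refine Tendsto.congr' ?_ h9
    filter_upwards [eventually_gt_atTop (0:ℝ)] with L hL
    have hLne : L ≠ 0 := ne_of_gt hL
    simp only [Pi.div_apply]
    rw [hb₁ L,
      show α*Kt*η*(r*L⁻¹+1) = (α * Kt * η * (r + L)) * L⁻¹ from by field_simp,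
      show -(r+η) - r*(r+l₁+η)*L⁻¹
          = (L * l₁ - (r + L) * (r + l₁ + η)) * L⁻¹ from by { field_simp; try ring; try tauto },
      mul_div_mul_right _ _ (inv_ne_zero hLne)]
  -- combined limit
  have hPhi : Tendsto (fun L => ((βLA L)⁻¹, βUB L * (βLA L)⁻¹, βUA L, a₁ L, b₁ L)) atTop
      (nhds ((0:ℝ), (-1:ℝ), m - Real.sqrt (m^2 + (2*η+2*r)/σ^2), α*η/(r-μ+η),
        -(α*Kt*η/(r+η)))) :=
    hu.prodMk_nhds (hv.prodMk_nhds (hW.prodMk_nhds (hA.prodMk_nhds hB)))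
  have main : ∀ (Nf Df : ℝ×ℝ×ℝ×ℝ×ℝ → ℝ), Continuous Nf → Continuous Df →
      Df ((0:ℝ), (-1:ℝ), m - Real.sqrt (m^2 + (2*η+2*r)/σ^2), α*η/(r-μ+η),
        -(α*Kt*η/(r+η))) ≠ 0 → ∀ (f : ℝ → ℝ),
      (∀ᶠ L in atTop, f L = Nf ((βLA L)⁻¹, βUB L*(βLA L)⁻¹, βUA L, a₁ L, b₁ L)
        / Df ((βLA L)⁻¹, βUB L*(βLA L)⁻¹, βUA L, a₁ L, b₁ L)) →
      Tendsto f atTop (nhds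
        (Nf ((0:ℝ), (-1:ℝ), m - Real.sqrt (m^2 + (2*η+2*r)/σ^2), α*η/(r-μ+η), -(α*Kt*η/(r+η)))
        / Df ((0:ℝ), (-1:ℝ), m - Real.sqrt (m^2 + (2*η+2*r)/σ^2), α*η/(r-μ+η),
          -(α*Kt*η/(r+η))))) := by
    intro Nf Df hNf hDf hne f hf
    have h1 := ((hNf.tendsto _).comp hPhi).div ((hDf.tendsto _).comp hPhi) hne
    refine Tendsto.congr' ?_ h1
    filter_upwards [hf] with L h
    rw [h]
    rfl
  have goalPLA : Tendsto PLA atTop (nhds (0:ℝ)) := by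
    have h := main
      (fun p => α*(βLB - p.2.2.1)*p.1*(-βLB*p.1 + p.2.1) + p.2.2.2.1*(p.2.2.1*p.1 - p.1)*(p.2.1 - p.1))
      (fun p => (1 - βLB*p.1)*(1 + βLB*p.1 - p.2.2.1*p.1 - p.2.1))
      (by fun_prop) (by fun_prop) (by norm_num) PLA ?_
    · convert h using 2
      norm_num
    · filter_upwards [hβLApos] with L hL
      have hne : βLA L ≠ 0 := ne_of_gt hL
      show PLA L = (α*(βLB - (βUA L))*(βLA L)⁻¹*(-βLB*(βLA L)⁻¹ + (βUB L*(βLA L)⁻¹)) + (a₁ L)*((βUA L)*(βLA L)⁻¹ - (βLA L)⁻¹)*((βUB L*(βLA L)⁻¹) - (βLA L)⁻¹)) / ((1 - βLB*(βLA L)⁻¹)*(1 + βLB*(βLA L)⁻¹ - (βUA L)*(βLA L)⁻¹ - (βUB L*(βLA L)⁻¹)))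
      rw [hPLA L, hD₁ L, hD₂ L,
        show α * (βLB - βUA L) * (-βLB + βUB L) + a₁ L * (βUA L - 1) * (βUB L - 1)
            = (α*(βLB - (βUA L))*(βLA L)⁻¹*(-βLB*(βLA L)⁻¹ + (βUB L*(βLA L)⁻¹)) + (a₁ L)*((βUA L)*(βLA L)⁻¹ - (βLA L)⁻¹)*((βUB L*(βLA L)⁻¹) - (βLA L)⁻¹)) * (βLA L)^2
          from by { field_simp; try ring; try tauto },
        show (βLA L - βLB) * (βLA L + βLB - βUA L - βUB L)
            = ((1 - βLB*(βLA L)⁻¹)*(1 + βLB*(βLA L)⁻¹ - (βUA L)*(βLA L)⁻¹ - (βUB L*(βLA L)⁻¹))) * (βLA L)^2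
          from by { field_simp; try ring; try tauto },
        mul_div_mul_right _ _ (pow_ne_zero 2 hne)]

  have goalQLA : Tendsto QLA atTop (nhds (0:ℝ)) := by
    have h := main
      (fun p => -(α*Kt)*(βLB - p.2.2.1)*p.1*(-βLB*p.1 + p.2.1) + p.2.2.2.2*(p.2.2.1*p.1)*p.2.1)
      (fun p => (1 - βLB*p.1)*(1 + βLB*p.1 - p.2.2.1*p.1 - p.2.1))
      (by fun_prop) (by fun_prop) (by norm_num) QLA ?_
    · convert h using 2
      norm_num
    · filter_upwards [hβLApos] with L hL
      have hne : βLA L ≠ 0 := ne_of_gt hL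
      show QLA L = (-(α*Kt)*(βLB - (βUA L))*(βLA L)⁻¹*(-βLB*(βLA L)⁻¹ + (βUB L*(βLA L)⁻¹)) + (b₁ L)*((βUA L)*(βLA L)⁻¹)*(βUB L*(βLA L)⁻¹)) / ((1 - βLB*(βLA L)⁻¹)*(1 + βLB*(βLA L)⁻¹ - (βUA L)*(βLA L)⁻¹ - (βUB L*(βLA L)⁻¹)))
      rw [hQLA L, hD₁ L, hD₂ L,
        show -(α * Kt) * (βLB - βUA L) * (-βLB + βUB L) + b₁ L * βUA L * βUB L
            = (-(α*Kt)*(βLB - (βUA L))*(βLA L)⁻¹*(-βLB*(βLA L)⁻¹ + (βUB L*(βLA L)⁻¹)) + (b₁ L)*((βUA L)*(βLA L)⁻¹)*(βUB L*(βLA L)⁻¹)) * (βLA L)^2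
          from by { field_simp; try ring; try tauto },
        show (βLA L - βLB) * (βLA L + βLB - βUA L - βUB L)
            = ((1 - βLB*(βLA L)⁻¹)*(1 + βLB*(βLA L)⁻¹ - (βUA L)*(βLA L)⁻¹ - (βUB L*(βLA L)⁻¹))) * (βLA L)^2
          from by { field_simp; try ring; try tauto },
        mul_div_mul_right _ _ (pow_ne_zero 2 hne)]

  have goalPUB : Tendsto PUB atTop (nhds (0:ℝ)) := by
    have h := main
      (fun p => α*(1 - p.2.2.1*p.1)*(-βLB*p.1 + p.2.2.1*p.1) - p.2.2.2.1*(p.2.2.1*p.1 - p.1)*(1 + βLB*p.1 - p.2.2.1*p.1 - p.1))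
      (fun p => (p.2.2.1*p.1 - p.2.1)*(1 + βLB*p.1 - p.2.2.1*p.1 - p.2.1))
      (by fun_prop) (by fun_prop) (by norm_num) PUB ?_
    · convert h using 2
      norm_num
    · filter_upwards [hβLApos] with L hL
      have hne : βLA L ≠ 0 := ne_of_gt hL
      show PUB L = (α*(1 - (βUA L)*(βLA L)⁻¹)*(-βLB*(βLA L)⁻¹ + (βUA L)*(βLA L)⁻¹) - (a₁ L)*((βUA L)*(βLA L)⁻¹ - (βLA L)⁻¹)*(1 + βLB*(βLA L)⁻¹ - (βUA L)*(βLA L)⁻¹ - (βLA L)⁻¹)) / (((βUA L)*(βLA L)⁻¹ - (βUB L*(βLA L)⁻¹))*(1 + βLB*(βLA L)⁻¹ - (βUA L)*(βLA L)⁻¹ - (βUB L*(βLA L)⁻¹)))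
      rw [hPUB L, hD₃ L, hD₂ L,
        show α * (βLA L - βUA L) * (-βLB + βUA L) - a₁ L * (βUA L - 1) * (βLA L + βLB - βUA L - 1)
            = (α*(1 - (βUA L)*(βLA L)⁻¹)*(-βLB*(βLA L)⁻¹ + (βUA L)*(βLA L)⁻¹) - (a₁ L)*((βUA L)*(βLA L)⁻¹ - (βLA L)⁻¹)*(1 + βLB*(βLA L)⁻¹ - (βUA L)*(βLA L)⁻¹ - (βLA L)⁻¹)) * (βLA L)^2
          from by { field_simp; try ring; try tauto },
        show (βUA L - βUB L) * (βLA L + βLB - βUA L - βUB L)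
            = (((βUA L)*(βLA L)⁻¹ - (βUB L*(βLA L)⁻¹))*(1 + βLB*(βLA L)⁻¹ - (βUA L)*(βLA L)⁻¹ - (βUB L*(βLA L)⁻¹))) * (βLA L)^2
          from by { field_simp; try ring; try tauto },
        mul_div_mul_right _ _ (pow_ne_zero 2 hne)]

  have goalQUB : Tendsto QUB atTop (nhds (0:ℝ)) := by
    have h := main
      (fun p => -(α*Kt)*(1 - p.2.2.1*p.1)*(-βLB*p.1 + p.2.2.1*p.1) - p.2.2.2.2*(p.2.2.1*p.1)*(1 + βLB*p.1 - p.2.2.1*p.1))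
      (fun p => (p.2.2.1*p.1 - p.2.1)*(1 + βLB*p.1 - p.2.2.1*p.1 - p.2.1))
      (by fun_prop) (by fun_prop) (by norm_num) QUB ?_
    · convert h using 2
      norm_num
    · filter_upwards [hβLApos] with L hL
      have hne : βLA L ≠ 0 := ne_of_gt hL
      show QUB L = (-(α*Kt)*(1 - (βUA L)*(βLA L)⁻¹)*(-βLB*(βLA L)⁻¹ + (βUA L)*(βLA L)⁻¹) - (b₁ L)*((βUA L)*(βLA L)⁻¹)*(1 + βLB*(βLA L)⁻¹ - (βUA L)*(βLA L)⁻¹)) / (((βUA L)*(βLA L)⁻¹ - (βUB L*(βLA L)⁻¹))*(1 + βLB*(βLA L)⁻¹ - (βUA L)*(βLA L)⁻¹ - (βUB L*(βLA L)⁻¹)))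
      rw [hQUB L, hD₃ L, hD₂ L,
        show -(α * Kt) * (βLA L - βUA L) * (-βLB + βUA L) - b₁ L * βUA L * (βLA L + βLB - βUA L)
            = (-(α*Kt)*(1 - (βUA L)*(βLA L)⁻¹)*(-βLB*(βLA L)⁻¹ + (βUA L)*(βLA L)⁻¹) - (b₁ L)*((βUA L)*(βLA L)⁻¹)*(1 + βLB*(βLA L)⁻¹ - (βUA L)*(βLA L)⁻¹)) * (βLA L)^2
          from by { field_simp; try ring; try tauto },
        show (βUA L - βUB L) * (βLA L + βLB - βUA L - βUB L)
            = (((βUA L)*(βLA L)⁻¹ - (βUB L*(βLA L)⁻¹))*(1 + βLB*(βLA L)⁻¹ - (βUA L)*(βLA L)⁻¹ - (βUB L*(βLA L)⁻¹))) * (βLA L)^2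
          from by { field_simp; try ring; try tauto },
        mul_div_mul_right _ _ (pow_ne_zero 2 hne)]

  have goalPLB : Tendsto PLB atTop (nhds α) := by
    have h := main
      (fun p => α*(1 - p.2.2.1*p.1)*(1 - p.2.1) - p.2.2.2.1*(p.2.2.1*p.1 - p.1)*(p.2.1 - p.1))
      (fun p => (1 - βLB*p.1)*(1 + βLB*p.1 - p.2.2.1*p.1 - p.2.1))
      (by fun_prop) (by fun_prop) (by norm_num) PLB ?_
    · convert h using 2
      norm_num
    · filter_upwards [hβLApos] with L hL
      have hne : βLA L ≠ 0 := ne_of_gt hL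
      show PLB L = (α*(1 - (βUA L)*(βLA L)⁻¹)*(1 - (βUB L*(βLA L)⁻¹)) - (a₁ L)*((βUA L)*(βLA L)⁻¹ - (βLA L)⁻¹)*((βUB L*(βLA L)⁻¹) - (βLA L)⁻¹)) / ((1 - βLB*(βLA L)⁻¹)*(1 + βLB*(βLA L)⁻¹ - (βUA L)*(βLA L)⁻¹ - (βUB L*(βLA L)⁻¹)))
      rw [hPLB L, hD₁ L, hD₂ L,
        show α * (βLA L - βUA L) * (βLA L - βUB L) - a₁ L * (βUA L - 1) * (βUB L - 1)
            = (α*(1 - (βUA L)*(βLA L)⁻¹)*(1 - (βUB L*(βLA L)⁻¹)) - (a₁ L)*((βUA L)*(βLA L)⁻¹ - (βLA L)⁻¹)*((βUB L*(βLA L)⁻¹) - (βLA L)⁻¹)) * (βLA L)^2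
          from by { field_simp; try ring; try tauto },
        show (βLA L - βLB) * (βLA L + βLB - βUA L - βUB L)
            = ((1 - βLB*(βLA L)⁻¹)*(1 + βLB*(βLA L)⁻¹ - (βUA L)*(βLA L)⁻¹ - (βUB L*(βLA L)⁻¹))) * (βLA L)^2
          from by { field_simp; try ring; try tauto },
        mul_div_mul_right _ _ (pow_ne_zero 2 hne)]

  have goalQLB : Tendsto QLB atTop (nhds (-(α * Kt))) := by
    have h := main
      (fun p => -(α*Kt)*(1 - p.2.2.1*p.1)*(1 - p.2.1) - p.2.2.2.2*(p.2.2.1*p.1)*p.2.1)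
      (fun p => (1 - βLB*p.1)*(1 + βLB*p.1 - p.2.2.1*p.1 - p.2.1))
      (by fun_prop) (by fun_prop) (by norm_num) QLB ?_
    · convert h using 2
      norm_num
      ring
    · filter_upwards [hβLApos] with L hL
      have hne : βLA L ≠ 0 := ne_of_gt hL
      show QLB L = (-(α*Kt)*(1 - (βUA L)*(βLA L)⁻¹)*(1 - (βUB L*(βLA L)⁻¹)) - (b₁ L)*((βUA L)*(βLA L)⁻¹)*(βUB L*(βLA L)⁻¹)) / ((1 - βLB*(βLA L)⁻¹)*(1 + βLB*(βLA L)⁻¹ - (βUA L)*(βLA L)⁻¹ - (βUB L*(βLA L)⁻¹)))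
      rw [hQLB L, hD₁ L, hD₂ L,
        show -(α * Kt) * (βLA L - βUA L) * (βLA L - βUB L) - b₁ L * βUA L * βUB L
            = (-(α*Kt)*(1 - (βUA L)*(βLA L)⁻¹)*(1 - (βUB L*(βLA L)⁻¹)) - (b₁ L)*((βUA L)*(βLA L)⁻¹)*(βUB L*(βLA L)⁻¹)) * (βLA L)^2
          from by { field_simp; try ring; try tauto },
        show (βLA L - βLB) * (βLA L + βLB - βUA L - βUB L)
            = ((1 - βLB*(βLA L)⁻¹)*(1 + βLB*(βLA L)⁻¹ - (βUA L)*(βLA L)⁻¹ - (βUB L*(βLA L)⁻¹))) * (βLA L)^2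
          from by { field_simp; try ring; try tauto },
        mul_div_mul_right _ _ (pow_ne_zero 2 hne)]

  have goalPUA : Tendsto PUA atTop (nhds ((r - μ) * α / (r - μ + η))) := by
    have h := main
      (fun p => α*(1 - p.2.1)*(βLB*p.1 - p.2.1) + p.2.2.2.1*(p.2.1 - p.1)*(1 + βLB*p.1 - p.2.1 - p.1))
      (fun p => (p.2.2.1*p.1 - p.2.1)*(1 + βLB*p.1 - p.2.2.1*p.1 - p.2.1))
      (by fun_prop) (by fun_prop) (by norm_num) PUA ?_
    · convert h using 2
      have hne2 : r - μ + η ≠ 0 := ne_of_gt (by linarith)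
      norm_num
      field_simp
      ring
    · filter_upwards [hβLApos] with L hL
      have hne : βLA L ≠ 0 := ne_of_gt hL
      show PUA L = (α*(1 - (βUB L*(βLA L)⁻¹))*(βLB*(βLA L)⁻¹ - (βUB L*(βLA L)⁻¹)) + (a₁ L)*((βUB L*(βLA L)⁻¹) - (βLA L)⁻¹)*(1 + βLB*(βLA L)⁻¹ - (βUB L*(βLA L)⁻¹) - (βLA L)⁻¹)) / (((βUA L)*(βLA L)⁻¹ - (βUB L*(βLA L)⁻¹))*(1 + βLB*(βLA L)⁻¹ - (βUA L)*(βLA L)⁻¹ - (βUB L*(βLA L)⁻¹)))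
      rw [hPUA L, hD₃ L, hD₂ L,
        show α * (βLA L - βUB L) * (βLB - βUB L) + a₁ L * (βUB L - 1) * (βLA L + βLB - βUB L - 1)
            = (α*(1 - (βUB L*(βLA L)⁻¹))*(βLB*(βLA L)⁻¹ - (βUB L*(βLA L)⁻¹)) + (a₁ L)*((βUB L*(βLA L)⁻¹) - (βLA L)⁻¹)*(1 + βLB*(βLA L)⁻¹ - (βUB L*(βLA L)⁻¹) - (βLA L)⁻¹)) * (βLA L)^2
          from by { field_simp; try ring; try tauto },
        show (βUA L - βUB L) * (βLA L + βLB - βUA L - βUB L)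
            = (((βUA L)*(βLA L)⁻¹ - (βUB L*(βLA L)⁻¹))*(1 + βLB*(βLA L)⁻¹ - (βUA L)*(βLA L)⁻¹ - (βUB L*(βLA L)⁻¹))) * (βLA L)^2
          from by { field_simp; try ring; try tauto },
        mul_div_mul_right _ _ (pow_ne_zero 2 hne)]

  have goalQUA : Tendsto QUA atTop (nhds (-(r * α * Kt) / (r + η))) := by
    have h := main
      (fun p => -(α*Kt)*(1 - p.2.1)*(βLB*p.1 - p.2.1) + p.2.2.2.2*p.2.1*(1 + βLB*p.1 - p.2.1))
      (fun p => (p.2.2.1*p.1 - p.2.1)*(1 + βLB*p.1 - p.2.2.1*p.1 - p.2.1))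
      (by fun_prop) (by fun_prop) (by norm_num) QUA ?_
    · convert h using 2
      have hne2 : r + η ≠ 0 := ne_of_gt (by positivity)
      norm_num
      field_simp
      ring
    · filter_upwards [hβLApos] with L hL
      have hne : βLA L ≠ 0 := ne_of_gt hL
      show QUA L = (-(α*Kt)*(1 - (βUB L*(βLA L)⁻¹))*(βLB*(βLA L)⁻¹ - (βUB L*(βLA L)⁻¹)) + (b₁ L)*(βUB L*(βLA L)⁻¹)*(1 + βLB*(βLA L)⁻¹ - (βUB L*(βLA L)⁻¹))) / (((βUA L)*(βLA L)⁻¹ - (βUB L*(βLA L)⁻¹))*(1 + βLB*(βLA L)⁻¹ - (βUA L)*(βLA L)⁻¹ - (βUB L*(βLA L)⁻¹)))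
      rw [hQUA L, hD₃ L, hD₂ L,
        show -(α * Kt) * (βLA L - βUB L) * (βLB - βUB L) + b₁ L * βUB L * (βLA L + βLB - βUB L)
            = (-(α*Kt)*(1 - (βUB L*(βLA L)⁻¹))*(βLB*(βLA L)⁻¹ - (βUB L*(βLA L)⁻¹)) + (b₁ L)*(βUB L*(βLA L)⁻¹)*(1 + βLB*(βLA L)⁻¹ - (βUB L*(βLA L)⁻¹))) * (βLA L)^2
          from by { field_simp; try ring; try tauto },
        show (βUA L - βUB L) * (βLA L + βLB - βUA L - βUB L)
            = (((βUA L)*(βLA L)⁻¹ - (βUB L*(βLA L)⁻¹))*(1 + βLB*(βLA L)⁻¹ - (βUA L)*(βLA L)⁻¹ - (βUB L*(βLA L)⁻¹))) * (βLA L)^2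
          from by { field_simp; try ring; try tauto },
        mul_div_mul_right _ _ (pow_ne_zero 2 hne)]

  exact ⟨goalPLA, goalQLA, goalPUB, goalQUB, goalPLB, goalQLB, goalPUA, goalQUA⟩
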